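/- arXiv:1105.4408 — 4 statements merged into one kernel-verified Lean document; each statement's English description precedes it below -/
import Mathlib

section
/- Let Φ have unit-norm columns with coherence μ < 1/(2K−1), and let x be a nonzero K-sparse vector with support T and y = Φx. Then the index maximizing |⟨φ_i, y⟩| belongs to T; i.e., the first step of orthogonal matching pursuit selects a correct index. -/
/-!
Write `G = ΦᵀΦ` for the Gram matrix, so that the correlations are `Φᵀy = G x`, `G` has unit
diagonal and off-diagonal entries bounded by `μ`. Let `j` be an index where `|x j|` is largest.
Off the support every term of `(G x) t` is an off-diagonal one, so `|(G x) t| ≤ μ ‖x‖₁ ≤ μ K |x j|`,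
while `(G x) j = x j + (off-diagonal terms)` gives `|(G x) j| ≥ |x j| - μ (K - 1) |x j|`.
The coherence bound `μ (2K - 1) < 1` makes the second quantity strictly larger than the first.
-/

open Finset Matrix

section Coherence

variable {ι : Type*} [Fintype ι] {G : Matrix ι ι ℝ} {μ : ℝ} {x : ι → ℝ}

theorem abs_mulVec_apply_le_of_apply_eq_zero (hoff : ∀ a b, a ≠ b → |G a b| ≤ μ)
    {t : ι} (ht : x t = 0) : |(G *ᵥ x) t| ≤ μ * ∑ l, |x l| := by
  rw [mulVec, dotProduct, mul_sum]
  refine (abs_sum_le_sum_abs _ _).trans (sum_le_sum fun l _ => ?_)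
  rw [abs_mul]
  rcases eq_or_ne t l with rfl | htl
  · simp [ht]
  · exact mul_le_mul_of_nonneg_right (hoff t l htl) (abs_nonneg _)

theorem sub_le_abs_mulVec_apply [DecidableEq ι] (hoff : ∀ a b, a ≠ b → |G a b| ≤ μ)
    {j : ι} (hdiag : G j j = 1) :
    |x j| - μ * ∑ l ∈ univ.erase j, |x l| ≤ |(G *ᵥ x) j| := by
  have hsplit : (G *ᵥ x) j = x j + ∑ l ∈ univ.erase j, G j l * x l := by
    rw [mulVec, dotProduct, ← add_sum_erase _ _ (mem_univ j), hdiag, one_mul]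
  have hrest : |∑ l ∈ univ.erase j, G j l * x l| ≤ μ * ∑ l ∈ univ.erase j, |x l| := by
    rw [mul_sum]
    refine (abs_sum_le_sum_abs _ _).trans (sum_le_sum fun l hl => ?_)
    rw [abs_mul]
    exact mul_le_mul_of_nonneg_right (hoff j l (ne_of_mem_erase hl).symm) (abs_nonneg _)
  rw [hsplit]
  linarith [abs_sub_abs_le_abs_add (x j) (∑ l ∈ univ.erase j, G j l * x l)]

theorem sum_abs_le_card_support_mul {j : ι} (hj : ∀ l, |x l| ≤ |x j|) :
    ∑ l, |x l| ≤ #{l | x l ≠ 0} * |x j| := by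
  rw [← sum_filter_of_ne fun l _ h => abs_ne_zero.mp h]
  simpa using sum_le_card_nsmul _ (fun l => |x l|) _ fun l _ => hj l

theorem exists_abs_mulVec_apply_gt_of_apply_eq_zero {K : ℕ} (hdiag : ∀ i, G i i = 1)
    (hoff : ∀ a b, a ≠ b → |G a b| ≤ μ) (hμK : μ < 1 / (2 * K - 1)) (hx0 : x ≠ 0)
    (hx : #{l | x l ≠ 0} ≤ K) {t : ι} (ht : x t = 0) :
    ∃ j, |(G *ᵥ x) t| < |(G *ᵥ x) j| := by
  classical
  have : Nonempty ι := ⟨t⟩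
  obtain ⟨j, hj⟩ := Finite.exists_max fun l => |x l|
  have hxj : x j ≠ 0 := by
    intro h
    exact hx0 (funext fun l => by simpa [h] using hj l)
  have hμ : 0 ≤ μ := (abs_nonneg _).trans (hoff j t fun h => hxj (h ▸ ht))
  have hK : (1 : ℝ) ≤ K := by
    exact_mod_cast (card_pos.mpr ⟨j, mem_filter.mpr ⟨mem_univ j, hxj⟩⟩).trans_le hx
  have hμK' : μ * (2 * K - 1) < 1 := (lt_div_iff₀ (by linarith)).mp hμK
  have hS : ∑ l, |x l| ≤ K * |x j| :=
    (sum_abs_le_card_support_mul hj).trans (by gcongr)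
  have hsum : ∑ l, |x l| = |x j| + ∑ l ∈ univ.erase j, |x l| :=
    (add_sum_erase _ _ (mem_univ j)).symm
  refine ⟨j, (abs_mulVec_apply_le_of_apply_eq_zero hoff ht).trans_lt
    (lt_of_lt_of_le ?_ (sub_le_abs_mulVec_apply hoff (hdiag j)))⟩
  have hpos : 0 < |x j| := abs_pos.mpr hxj
  nlinarith [mul_le_mul_of_nonneg_left hS hμ, mul_lt_mul_of_pos_right hμK' hpos]

end Coherence

theorem sum_mul_mulVec_eq_transpose_mul_mulVec {κ ι : Type*} [Fintype κ] [Fintype ι]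
    (Φ : Matrix κ ι ℝ) (x : ι → ℝ) (i : ι) :
    ∑ k, Φ k i * (Φ *ᵥ x) k = ((Φᵀ * Φ) *ᵥ x) i := by
  rw [← mulVec_mulVec]
  rfl

theorem omp_first_step_correct_general (m n K : ℕ)
    (Φ : Matrix (Fin m) (Fin n) ℝ) (μ : ℝ)
    (hunit : ∀ j, ∑ i, (Φ i j) ^ 2 = 1)
    (hμ : ∀ a b, a ≠ b → |∑ i, Φ i a * Φ i b| ≤ μ)
    (hμK : μ < 1 / (2 * K - 1))
    (x : Fin n → ℝ) (hx0 : x ≠ 0)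
    (hx : (Finset.univ.filter (fun j => x j ≠ 0)).card ≤ K)
    (y : Fin m → ℝ) (hy : y = Φ.mulVec x)
    (t : Fin n) (ht : ∀ i, |∑ k, Φ k i * y k| ≤ |∑ k, Φ k t * y k|) :
    x t ≠ 0 := by
  intro hxt
  subst hy
  have hdiag : ∀ j, (Φᵀ * Φ) j j = 1 := fun j => by simpa [mul_apply, sq] using hunit j
  obtain ⟨j, hj⟩ := exists_abs_mulVec_apply_gt_of_apply_eq_zero hdiag hμ hμK hx0 hx hxt
  simp only [← sum_mul_mulVec_eq_transpose_mul_mulVec] at hj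
  exact (ht j).not_gt hj

/-- If `Φ` has unit-norm columns with coherence `μ < 1/(2K−1)` and `x` is a nonzero
`K`-sparse vector with `y = Φx`, then any index maximizing `|⟨φ_i, y⟩|` belongs to the
support of `x`: the first OMP step selects a correct index. -/
theorem omp_first_step_correct (m n K : ℕ) (hK : 1 ≤ K)
    (Φ : Matrix (Fin m) (Fin n) ℝ) (μ : ℝ)
    (hunit : ∀ j, ∑ i, (Φ i j) ^ 2 = 1)
    (hμ : ∀ a b, a ≠ b → |∑ i, Φ i a * Φ i b| ≤ μ)
    (hμK : μ < 1 / (2 * K - 1))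
    (x : Fin n → ℝ) (hx0 : x ≠ 0)
    (hx : (Finset.univ.filter (fun j => x j ≠ 0)).card ≤ K)
    (y : Fin m → ℝ) (hy : y = Φ.mulVec x)
    (t : Fin n) (ht : ∀ i, |∑ k, Φ k i * y k| ≤ |∑ k, Φ k t * y k|) :
    x t ≠ 0 :=
  omp_first_step_correct_general m n K Φ μ hunit hμ hμK x hx0 hx y hy t ht
end

section
/- Let Φ ∈ ℝ^{m×n} have unit ℓ₂-norm columns and coherence μ < 1/(2K−1). Then the orthogonal matching pursuit algorithm, run for K iterations on y = Φx, exactly recovers every K-sparse vector x; in particular at every iteration OMP selects a new index from the support of x. -/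
/-!
Write `G = Φᵀ Φ` and `S` for the support of `x`. As long as the selected set `T^k` lies in `S`,
the residual is `Φ v` with `v = x - x̂_k` supported on `S`, and its correlations with the columns
are `v ᵥ* G`. Coherence bounds these by `|S| μ ‖v‖∞` off `S`, and from below by
`(1 - (|S| - 1) μ) ‖v‖∞` at the index where `|v|` peaks; since `(2|S| - 1) μ < 1`, the greedy choice
lies in `S` and has nonzero correlation, hence is new, because a least-squares residual is
orthogonal to the columns already selected. After `K` steps `T^K = S`, so `x` is a feasible fit
with zero residual, and `Φ (x̂_K - x) = 0` with support in `S` forces `x̂_K = x` by the same bound.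
-/

/-- A run of the orthogonal matching pursuit algorithm on measurements `y` with sensing
matrix `Φ`: `sel k` is the set `T^k` of selected indices, `t (k+1)` the index selected at
step `k+1` (a maximizer of the correlation with the current residual), `est k` the
least-squares estimate supported on `sel k`, and `r k` the residual. -/
structure OMPRun (m n K : ℕ) (Φ : Matrix (Fin m) (Fin n) ℝ) (y : Fin m → ℝ) where
  t : ℕ → Fin n
  sel : ℕ → Finset (Fin n)
  est : ℕ → (Fin n → ℝ)
  r : ℕ → (Fin m → ℝ)
  sel_zero : sel 0 = ∅
  sel_succ : ∀ k, sel (k + 1) = insert (t (k + 1)) (sel k)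
  r_zero : r 0 = y
  t_max : ∀ k < K, ∀ j, |∑ i, r k i * Φ i j| ≤ |∑ i, r k i * Φ i (t (k + 1))|
  est_supp : ∀ k, ∀ j ∉ sel k, est k j = 0
  est_min : ∀ k, ∀ z : Fin n → ℝ, (∀ j ∉ sel k, z j = 0) →
    ∑ i, (y i - Φ.mulVec (est k) i) ^ 2 ≤ ∑ i, (y i - Φ.mulVec z i) ^ 2
  r_succ : ∀ k, r (k + 1) = fun i => y i - Φ.mulVec (est (k + 1)) i

open Finset Matrix

lemma eq_zero_of_forall_two_mul_mul_le {c N : ℝ} (hN : 0 ≤ N)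
    (h : ∀ t : ℝ, 2 * t * c ≤ t ^ 2 * N) : c = 0 := by
  have hN1 : 0 < N + 1 := by linarith
  have key := h (c / (N + 1))
  field_simp at key
  nlinarith [sq_nonneg c]

section LeastSquares

variable {ι κ : Type*} [Fintype ι] [Fintype κ] [DecidableEq κ]

theorem vecMul_sub_mulVec_apply_eq_zero {Φ : Matrix ι κ ℝ} {y : ι → ℝ} {z : κ → ℝ} {j : κ}
    (hmin : ∀ t : ℝ,
      ∑ i, (y i - (Φ *ᵥ z) i) ^ 2 ≤ ∑ i, (y i - (Φ *ᵥ (z + Pi.single j t)) i) ^ 2) :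
    ((y - Φ *ᵥ z) ᵥ* Φ) j = 0 := by
  refine eq_zero_of_forall_two_mul_mul_le (N := ∑ i, Φ i j ^ 2)
    (sum_nonneg fun i _ => sq_nonneg _) fun t => ?_
  have expand : ∑ i, (y i - (Φ *ᵥ (z + Pi.single j t)) i) ^ 2 =
      ∑ i, (y i - (Φ *ᵥ z) i) ^ 2 - 2 * t * ((y - Φ *ᵥ z) ᵥ* Φ) j
        + t ^ 2 * ∑ i, Φ i j ^ 2 := by
    simp only [mulVec_add, mulVec_single, vecMul, dotProduct, mul_sum, ← sum_sub_distrib,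
      ← sum_add_distrib]
    refine sum_congr rfl fun i _ => ?_
    simp only [Pi.add_apply, Pi.sub_apply, Pi.smul_apply, col_apply, MulOpposite.smul_eq_mul_unop,
      MulOpposite.unop_op]
    ring
  linarith [hmin t]

end LeastSquares

section Coherence

variable {κ : Type*} {G : Matrix κ κ ℝ} {μ M : ℝ} {v : κ → ℝ}

lemma abs_sum_mul_le (T : Finset κ) {j : κ} (hG : ∀ l ∈ T, |G l j| ≤ μ)
    (hM : ∀ l ∈ T, |v l| ≤ M) : |∑ l ∈ T, v l * G l j| ≤ #T * μ * M := by
  calc |∑ l ∈ T, v l * G l j| ≤ ∑ l ∈ T, |v l * G l j| := abs_sum_le_sum_abs _ _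
    _ ≤ ∑ _l ∈ T, μ * M := sum_le_sum fun l hl => by
        rw [abs_mul, mul_comm]
        exact mul_le_mul (hG l hl) (hM l hl) (abs_nonneg _) ((abs_nonneg _).trans (hG l hl))
    _ = #T * μ * M := by rw [sum_const, nsmul_eq_mul, mul_assoc]

variable [Fintype κ] {S : Finset κ}

lemma vecMul_apply_eq_sum_of_support (hv : ∀ l ∉ S, v l = 0) (j : κ) :
    (v ᵥ* G) j = ∑ l ∈ S, v l * G l j :=
  (sum_subset (subset_univ S) fun l _ hl => by rw [hv l hl, zero_mul]).symm

lemma abs_vecMul_apply_le_of_notMem (hoff : ∀ a b, a ≠ b → |G a b| ≤ μ)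
    (hv : ∀ l ∉ S, v l = 0) (hM : ∀ l, |v l| ≤ M) {j : κ} (hj : j ∉ S) :
    |(v ᵥ* G) j| ≤ #S * μ * M := by
  rw [vecMul_apply_eq_sum_of_support hv]
  exact abs_sum_mul_le S (fun l hl => hoff l j (ne_of_mem_of_not_mem hl hj)) fun l _ => hM l

lemma sub_le_abs_vecMul_apply_of_mem [DecidableEq κ] (hoff : ∀ a b, a ≠ b → |G a b| ≤ μ)
    (hv : ∀ l ∉ S, v l = 0) {j : κ} (hdiag : G j j = 1) (hM : ∀ l, |v l| ≤ |v j|)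
    (hj : j ∈ S) : |v j| - (#S - 1) * μ * |v j| ≤ |(v ᵥ* G) j| := by
  have hrest : |∑ l ∈ S.erase j, v l * G l j| ≤ (#S - 1) * μ * |v j| := by
    have h := abs_sum_mul_le (S.erase j) (fun l hl => hoff l j (ne_of_mem_erase hl))
      fun l _ => hM l
    rwa [card_erase_of_mem hj, Nat.cast_sub (card_pos.mpr ⟨j, hj⟩), Nat.cast_one] at h
  rw [vecMul_apply_eq_sum_of_support hv, ← add_sum_erase S _ hj, hdiag, mul_one]
  linarith [abs_sub_abs_le_abs_add (v j) (∑ l ∈ S.erase j, v l * G l j)]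

theorem mem_and_vecMul_apply_ne_zero_of_forall_abs_le [DecidableEq κ] (hdiag : ∀ j, G j j = 1)
    (hoff : ∀ a b, a ≠ b → |G a b| ≤ μ) (hμ : μ < 1 / (2 * #S - 1))
    (hv : ∀ l ∉ S, v l = 0) (hv0 : v ≠ 0) {t : κ} (ht : ∀ j, |(v ᵥ* G) j| ≤ |(v ᵥ* G) t|) :
    t ∈ S ∧ (v ᵥ* G) t ≠ 0 := by
  obtain ⟨l, hl⟩ := Function.ne_iff.mp hv0
  have : Nonempty κ := ⟨l⟩
  obtain ⟨j, hj⟩ := Finite.exists_max fun l => |v l|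
  have hvj : 0 < |v j| := (abs_pos.mpr hl).trans_le (hj l)
  have hjS : j ∈ S := by
    by_contra h
    simp [hv j h] at hvj
  have hS : (1 : ℝ) ≤ #S := by exact_mod_cast card_pos.mpr ⟨j, hjS⟩
  have hμ_two_mul : (2 * #S - 1) * μ < 1 := by rwa [lt_div_iff₀ (by linarith), mul_comm] at hμ
  have hμ_sub_one : (#S - 1) * μ < 1 := by rcases le_or_gt 0 μ with h | h <;> nlinarith
  have hlow := sub_le_abs_vecMul_apply_of_mem hoff hv (hdiag j) hj hjS
  refine ⟨?_, ?_⟩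
  · by_contra htS
    have hup := abs_vecMul_apply_le_of_notMem hoff hv hj htS
    nlinarith [ht j]
  · rw [← abs_pos]
    nlinarith [ht j]

theorem eq_zero_of_vecMul_eq_zero [DecidableEq κ] (hdiag : ∀ j, G j j = 1)
    (hoff : ∀ a b, a ≠ b → |G a b| ≤ μ) (hμ : μ < 1 / (2 * #S - 1))
    (hv : ∀ l ∉ S, v l = 0) (h : v ᵥ* G = 0) : v = 0 := by
  by_contra hv0
  obtain ⟨l, -⟩ := Function.ne_iff.mp hv0
  exact (mem_and_vecMul_apply_ne_zero_of_forall_abs_le hdiag hoff hμ hv hv0 (t := l)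
    (by simp [h])).2 (by simp [h])

end Coherence

lemma transpose_mul_self_apply_self {ι κ : Type*} [Fintype ι] {Φ : Matrix ι κ ℝ} {j : κ}
    (hunit : ∑ i, Φ i j ^ 2 = 1) : (Φᵀ * Φ) j j = 1 := by
  simpa only [mul_apply, transpose_apply, sq] using hunit

lemma mulVec_vecMul_eq_vecMul_transpose_mul_self {ι κ : Type*} [Fintype ι] [Fintype κ]
    (Φ : Matrix ι κ ℝ) (v : κ → ℝ) : (Φ *ᵥ v) ᵥ* Φ = v ᵥ* (Φᵀ * Φ) := by
  rw [← vecMul_transpose, vecMul_vecMul]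

namespace OMPRun

variable {m n K : ℕ} {Φ : Matrix (Fin m) (Fin n) ℝ} {y : Fin m → ℝ} (run : OMPRun m n K Φ y)

lemma est_zero : run.est 0 = 0 :=
  funext fun j => run.est_supp 0 j (by simp [run.sel_zero])

lemma r_eq (k : ℕ) : run.r k = y - Φ *ᵥ run.est k := by
  cases k with
  | zero => simp [run.r_zero, run.est_zero]
  | succ k => exact run.r_succ k

lemma vecMul_r_apply_eq_zero {k : ℕ} {j : Fin n} (hj : j ∈ run.sel k) : (run.r k ᵥ* Φ) j = 0 := by
  rw [run.r_eq]
  refine vecMul_sub_mulVec_apply_eq_zero fun t => run.est_min k _ fun l hl => ?_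
  rw [Pi.add_apply, run.est_supp k l hl, zero_add,
    Pi.single_eq_of_ne (ne_of_mem_of_not_mem hj hl).symm]

variable {μ : ℝ} {x : Fin n → ℝ} {S : Finset (Fin n)}

lemma r_eq_mulVec_sub (hy : y = Φ *ᵥ x) (k : ℕ) : run.r k = Φ *ᵥ (x - run.est k) := by
  rw [run.r_eq, mulVec_sub, ← hy]

theorem t_succ_mem_and_notMem (hunit : ∀ j, ∑ i, Φ i j ^ 2 = 1)
    (hμ : ∀ a b, a ≠ b → |∑ i, Φ i a * Φ i b| ≤ μ) (hμS : μ < 1 / (2 * #S - 1))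
    (hS : ∀ l, l ∈ S ↔ x l ≠ 0) (hy : y = Φ *ᵥ x) {k : ℕ} (hk : k < K)
    (hsub : run.sel k ⊆ S) (hcard : #(run.sel k) < #S) :
    run.t (k + 1) ∈ S ∧ run.t (k + 1) ∉ run.sel k := by
  have hv : ∀ l ∉ S, (x - run.est k) l = 0 := fun l hl => by
    rw [Pi.sub_apply, run.est_supp k l (fun h => hl (hsub h)), sub_zero]
    exact not_ne_iff.mp (mt (hS l).mpr hl)
  have hv0 : x - run.est k ≠ 0 := fun h0 => by
    refine hcard.not_ge (card_le_card fun l hl => ?_)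
    by_contra hnot
    have := congr_fun h0 l
    rw [Pi.sub_apply, run.est_supp k l hnot, sub_zero] at this
    exact (hS l).mp hl this
  have hcorr : run.r k ᵥ* Φ = (x - run.est k) ᵥ* (Φᵀ * Φ) := by
    rw [run.r_eq_mulVec_sub hy, mulVec_vecMul_eq_vecMul_transpose_mul_self]
  obtain ⟨hmem, hne⟩ := mem_and_vecMul_apply_ne_zero_of_forall_abs_le
    (fun j => transpose_mul_self_apply_self (hunit j)) hμ hμS hv hv0
    (t := run.t (k + 1)) (hcorr ▸ run.t_max k hk)
  exact ⟨hmem, fun hsel => hne (hcorr ▸ run.vecMul_r_apply_eq_zero hsel)⟩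

theorem sel_subset_and_card_eq (hunit : ∀ j, ∑ i, Φ i j ^ 2 = 1)
    (hμ : ∀ a b, a ≠ b → |∑ i, Φ i a * Φ i b| ≤ μ) (hμS : μ < 1 / (2 * #S - 1))
    (hS : ∀ l, l ∈ S ↔ x l ≠ 0) (hy : y = Φ *ᵥ x) (hSK : #S = K) :
    ∀ k ≤ K, run.sel k ⊆ S ∧ #(run.sel k) = k := by
  intro k
  induction k with
  | zero => simp [run.sel_zero]
  | succ k ih =>
    intro hk
    obtain ⟨hsub, hcard⟩ := ih (Nat.le_of_succ_le hk)
    obtain ⟨hmem, hnew⟩ := run.t_succ_mem_and_notMem hunit hμ hμS hS hy hk hsub (by omega)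
    rw [run.sel_succ, card_insert_of_notMem hnew, hcard]
    exact ⟨insert_subset hmem hsub, rfl⟩

theorem est_eq_of_sel_eq (hunit : ∀ j, ∑ i, Φ i j ^ 2 = 1)
    (hμ : ∀ a b, a ≠ b → |∑ i, Φ i a * Φ i b| ≤ μ) (hμS : μ < 1 / (2 * #S - 1))
    (hS : ∀ l, l ∈ S ↔ x l ≠ 0) (hy : y = Φ *ᵥ x) {k : ℕ} (hsel : run.sel k = S) :
    run.est k = x := by
  have hx : ∀ l ∉ run.sel k, x l = 0 := fun l hl => not_ne_iff.mp (mt (hS l).mpr (hsel ▸ hl))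
  have hresidual : ∑ i, (y i - (Φ *ᵥ run.est k) i) ^ 2 = 0 :=
    le_antisymm (by simpa [← hy] using run.est_min k x hx) (sum_nonneg fun i _ => sq_nonneg _)
  have hfit : Φ *ᵥ (run.est k - x) = 0 := by
    rw [mulVec_sub, ← hy, sub_eq_zero]
    funext i
    have hi := (sum_eq_zero_iff_of_nonneg fun i _ => sq_nonneg _).mp hresidual i (mem_univ i)
    exact (sub_eq_zero.mp (pow_eq_zero_iff two_ne_zero |>.mp hi)).symm
  refine sub_eq_zero.mp (eq_zero_of_vecMul_eq_zero
    (fun j => transpose_mul_self_apply_self (hunit j)) hμ hμS (fun l hl => ?_) ?_)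
  · rw [Pi.sub_apply, run.est_supp k l (hsel ▸ hl), hx l (hsel ▸ hl), sub_zero]
  · rw [← mulVec_vecMul_eq_vecMul_transpose_mul_self, hfit, zero_vecMul]

end OMPRun

theorem omp_exact_recovery_general (m n K : ℕ)
    (Φ : Matrix (Fin m) (Fin n) ℝ) (μ : ℝ)
    (hunit : ∀ j, ∑ i, (Φ i j) ^ 2 = 1)
    (hμ : ∀ a b, a ≠ b → |∑ i, Φ i a * Φ i b| ≤ μ)
    (hμK : μ < 1 / (2 * K - 1))
    (x : Fin n → ℝ)
    (hx : (Finset.univ.filter (fun j => x j ≠ 0)).card = K)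
    (y : Fin m → ℝ) (hy : y = Φ.mulVec x)
    (run : OMPRun m n K Φ y) :
    (∀ k < K, x (run.t (k + 1)) ≠ 0 ∧ run.t (k + 1) ∉ run.sel k) ∧
      run.est K = x := by
  set S := univ.filter fun j => x j ≠ 0
  have hS : ∀ l, l ∈ S ↔ x l ≠ 0 := by simp [S]
  rw [← hx] at hμK
  have hsel := run.sel_subset_and_card_eq hunit hμ hμK hS hy hx
  refine ⟨fun k hk => ?_, run.est_eq_of_sel_eq hunit hμ hμK hS hy
    (eq_of_subset_of_card_le (hsel K le_rfl).1 (by rw [(hsel K le_rfl).2, hx]))⟩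
  obtain ⟨hsub, hcard⟩ := hsel k hk.le
  obtain ⟨hmem, hnew⟩ := run.t_succ_mem_and_notMem hunit hμ hμK hS hy hk hsub (by omega)
  exact ⟨(hS _).mp hmem, hnew⟩

/-- If `Φ` has unit-norm columns and coherence `μ < 1/(2K−1)`, then OMP run for `K`
iterations on `y = Φx` exactly recovers the `K`-sparse vector `x`; in particular at
every iteration it selects a new index from the support of `x`. -/
theorem omp_exact_recovery (m n K : ℕ) (hK : 1 ≤ K)
    (Φ : Matrix (Fin m) (Fin n) ℝ) (μ : ℝ)
    (hunit : ∀ j, ∑ i, (Φ i j) ^ 2 = 1)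
    (hμ : ∀ a b, a ≠ b → |∑ i, Φ i a * Φ i b| ≤ μ)
    (hμK : μ < 1 / (2 * K - 1))
    (x : Fin n → ℝ)
    (hx : (Finset.univ.filter (fun j => x j ≠ 0)).card = K)
    (y : Fin m → ℝ) (hy : y = Φ.mulVec x)
    (run : OMPRun m n K Φ y) :
    (∀ k < K, x (run.t (k + 1)) ≠ 0 ∧ run.t (k + 1) ∉ run.sel k) ∧
      run.est K = x :=
  omp_exact_recovery_general m n K Φ μ hunit hμ hμK x hx y hy run
end

section
/- Let Φ have unit-norm columns, coherence μ < 1/(2K−1), and suppose after k successful iterations of OMP (with all selected indices in T = supp(x), |T| = K, k < K) the residual r^k is nonzero. Then the next selected index t^{k+1} = argmax_j |⟨r^k, φ_j⟩| lies in T \ T^k. -/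
/-!
Write `v = x - x̂`, supported on `T = supp x`, so that `r = Φ v` and the correlations
`⟨r, φ_j⟩` are the entries of `v ᵥ* G` for the Gram matrix `G = Φᵀ Φ`, which has unit diagonal
and off-diagonal entries bounded by `μ`. If `M = |v_s|` is the largest entry of `v`, then
`|⟨r, φ_s⟩| ≥ M (1 - (K - 1) μ)` while `|⟨r, φ_j⟩| ≤ K μ M` for `j ∉ T`, and `μ < 1 / (2K - 1)` is
exactly what separates the two bounds. The maximiser also avoids `T^k`, because the least-squares
residual is orthogonal to every selected column.
-/

open Finset Matrix

variable {ι κ : Type*} [Fintype ι] [Fintype κ]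

theorem sum_mul_eq_zero_of_forall_sum_sq_le {r φ : ι → ℝ}
    (h : ∀ s : ℝ, ∑ i, r i ^ 2 ≤ ∑ i, (r i - s * φ i) ^ 2) : ∑ i, r i * φ i = 0 := by
  have hquad : ∀ s : ℝ, 0 ≤ (∑ i, φ i ^ 2) * (s * s) + (-2 * ∑ i, r i * φ i) * s + 0 := by
    intro s
    have hexpand : ∑ i, (r i - s * φ i) ^ 2 - ∑ i, r i ^ 2
        = (∑ i, φ i ^ 2) * (s * s) + (-2 * ∑ i, r i * φ i) * s := by
      simp only [mul_sum, sum_mul, ← sum_sub_distrib, ← sum_add_distrib]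
      exact sum_congr rfl fun i _ => by ring
    linarith [h s]
  simpa [discrim] using discrim_le_zero hquad

theorem vecMul_sub_mulVec_eq_zero_of_forall_le [DecidableEq κ] {Φ : Matrix ι κ ℝ} {y : ι → ℝ}
    {S : Set κ} {xhat : κ → ℝ} (hsupp : ∀ j ∉ S, xhat j = 0)
    (hmin : ∀ z : κ → ℝ, (∀ j ∉ S, z j = 0) →
      ∑ i, (y i - (Φ *ᵥ xhat) i) ^ 2 ≤ ∑ i, (y i - (Φ *ᵥ z) i) ^ 2)
    {j : κ} (hj : j ∈ S) : ((y - Φ *ᵥ xhat) ᵥ* Φ) j = 0 := by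
  refine sum_mul_eq_zero_of_forall_sum_sq_le fun s => ?_
  have hz : ∀ l ∉ S, (xhat + Pi.single j s : κ → ℝ) l = 0 := fun l hl => by
    rw [Pi.add_apply, hsupp l hl, Pi.single_eq_of_ne (ne_of_mem_of_not_mem hj hl).symm, add_zero]
  have hresid : ∀ i, y i - (Φ *ᵥ (xhat + Pi.single j s)) i = (y - Φ *ᵥ xhat) i - s * Φ i j :=
    fun i => by
      simp only [mulVec_add, mulVec_single, op_smul_eq_smul, Pi.add_apply, Pi.smul_apply,
        col_apply, smul_eq_mul, Pi.sub_apply]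
      ring
  have hle := hmin _ hz
  simp only [hresid] at hle
  exact hle

section Gram

variable {G : Matrix κ κ ℝ} {μ M : ℝ} {T : Finset κ} {v : κ → ℝ}

theorem vecMul_apply_eq_sum_of_support_subset (hv : ∀ l ∉ T, v l = 0) (j : κ) :
    (v ᵥ* G) j = ∑ l ∈ T, v l * G l j :=
  (sum_subset (subset_univ T) fun l _ hl => by rw [hv l hl, zero_mul]).symm

omit [Fintype κ] in
theorem abs_sum_mul_le_card_mul (hM : ∀ l ∈ T, |v l| ≤ M) (hoff : ∀ a b, a ≠ b → |G a b| ≤ μ)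
    {j : κ} (hj : j ∉ T) : |∑ l ∈ T, v l * G l j| ≤ #T * μ * M := by
  calc |∑ l ∈ T, v l * G l j| ≤ ∑ l ∈ T, |v l * G l j| := abs_sum_le_sum_abs _ _
    _ ≤ #T • (M * μ) := by
      refine sum_le_card_nsmul _ _ _ fun l hl => ?_
      rw [abs_mul]
      exact mul_le_mul (hM l hl) (hoff l j (ne_of_mem_of_not_mem hl hj)) (abs_nonneg _)
        ((abs_nonneg _).trans (hM l hl))
    _ = #T * μ * M := by rw [nsmul_eq_mul]; ring

theorem sub_le_abs_vecMul_apply [DecidableEq κ] (hv : ∀ l ∉ T, v l = 0) (hM : ∀ l ∈ T, |v l| ≤ M)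
    (hoff : ∀ a b, a ≠ b → |G a b| ≤ μ) {j : κ} (hdiag : G j j = 1) (hj : j ∈ T) :
    |v j| - (#T - 1) * μ * M ≤ |(v ᵥ* G) j| := by
  have hrest := abs_sum_mul_le_card_mul (fun l hl => hM l (mem_of_mem_erase hl)) hoff
    (notMem_erase j T)
  rw [card_erase_of_mem hj, Nat.cast_pred (card_pos.mpr ⟨j, hj⟩)] at hrest
  rw [vecMul_apply_eq_sum_of_support_subset hv, ← add_sum_erase T _ hj, hdiag, mul_one]
  have htriangle := abs_sub_abs_le_abs_sub (v j) (-∑ l ∈ T.erase j, v l * G l j)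
  rw [abs_neg, sub_neg_eq_add] at htriangle
  linarith

theorem exists_forall_notMem_abs_vecMul_apply_lt [DecidableEq κ] (hdiag : ∀ j, G j j = 1)
    (hoff : ∀ a b, a ≠ b → |G a b| ≤ μ) (hμ : μ < 1 / (2 * #T - 1))
    (hv : ∀ l ∉ T, v l = 0) (hv0 : v ≠ 0) :
    ∃ s, 0 < |(v ᵥ* G) s| ∧ ∀ j ∉ T, |(v ᵥ* G) j| < |(v ᵥ* G) s| := by
  obtain ⟨l₀, hl₀⟩ : ∃ l, v l ≠ 0 := by
    by_contra! h
    exact hv0 (funext h)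
  have hl₀T : l₀ ∈ T := by
    by_contra h
    exact hl₀ (hv l₀ h)
  obtain ⟨s, hs, hmax⟩ := T.exists_max_image (|v ·|) ⟨l₀, hl₀T⟩
  have hM : 0 < |v s| := (abs_pos.mpr hl₀).trans_le (hmax l₀ hl₀T)
  have hK : (1 : ℝ) ≤ #T := by exact_mod_cast card_pos.mpr ⟨s, hs⟩
  have hμ₁ : μ * (2 * #T - 1) < 1 := (lt_div_iff₀ (by linarith)).mp hμ
  have hμ₂ : (#T - 1) * μ < 1 := by rcases le_or_gt 0 μ with h | h <;> nlinarith
  have hlow := sub_le_abs_vecMul_apply hv hmax hoff (hdiag s) hs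
  refine ⟨s, ?_, fun j hj => ?_⟩
  · nlinarith [mul_pos hM (sub_pos.mpr hμ₂)]
  · rw [vecMul_apply_eq_sum_of_support_subset hv]
    have hup := abs_sum_mul_le_card_mul hmax hoff hj
    nlinarith [mul_pos hM (sub_pos.mpr hμ₁)]

end Gram

theorem omp_induction_step_general (m n K : ℕ)
    (Φ : Matrix (Fin m) (Fin n) ℝ) (μ : ℝ)
    (hunit : ∀ j, ∑ i, (Φ i j) ^ 2 = 1)
    (hμ : ∀ a b, a ≠ b → |∑ i, Φ i a * Φ i b| ≤ μ)
    (hμK : μ < 1 / (2 * K - 1))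
    (x : Fin n → ℝ)
    (hx : (Finset.univ.filter (fun j => x j ≠ 0)).card = K)
    (y : Fin m → ℝ) (hy : y = Φ.mulVec x)
    (S : Finset (Fin n)) (hST : ∀ j ∈ S, x j ≠ 0)
    (xhat : Fin n → ℝ) (hxhat_supp : ∀ j ∉ S, xhat j = 0)
    (hxhat_min : ∀ z : Fin n → ℝ, (∀ j ∉ S, z j = 0) →
      ∑ i, (y i - Φ.mulVec xhat i) ^ 2 ≤ ∑ i, (y i - Φ.mulVec z i) ^ 2)
    (r : Fin m → ℝ) (hr : r = fun i => y i - Φ.mulVec xhat i) (hr0 : r ≠ 0)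
    (t : Fin n) (ht : ∀ j, |∑ i, r i * Φ i j| ≤ |∑ i, r i * Φ i t|) :
    x t ≠ 0 ∧ t ∉ S := by
  set T := univ.filter fun j => x j ≠ 0
  have hres : r = Φ *ᵥ (x - xhat) := by rw [hr, hy, mulVec_sub]; rfl
  have hcorr : r ᵥ* Φ = (x - xhat) ᵥ* (Φᵀ * Φ) := by
    rw [hres, ← vecMul_transpose, vecMul_vecMul]
  have hdiag : ∀ j, (Φᵀ * Φ) j j = 1 := fun j => by simpa [mul_apply, sq] using hunit j
  have hoff : ∀ a b, a ≠ b → |(Φᵀ * Φ) a b| ≤ μ := fun a b hab => by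
    simpa [mul_apply] using hμ a b hab
  have hv : ∀ l ∉ T, (x - xhat) l = 0 := fun l hl => by
    have hxl : x l = 0 := by simpa [T] using hl
    simp [hxl, hxhat_supp l fun hlS => hST l hlS hxl]
  have hv0 : x - xhat ≠ 0 := fun h => hr0 (by rw [hres, h, mulVec_zero])
  obtain ⟨s, hpos, hlt⟩ :=
    exists_forall_notMem_abs_vecMul_apply_lt hdiag hoff (hx ▸ hμK) hv hv0
  have hmax : ∀ j, |(r ᵥ* Φ) j| ≤ |(r ᵥ* Φ) t| := ht
  rw [hcorr] at hmax
  refine ⟨fun hxt => (hlt t (by simp [T, hxt])).not_ge (hmax s), fun htS => ?_⟩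
  have horth : (r ᵥ* Φ) t = 0 := by
    rw [hr]
    exact vecMul_sub_mulVec_eq_zero_of_forall_le hxhat_supp hxhat_min htS
  rw [hcorr] at horth
  linarith [hmax s, abs_eq_zero.mpr horth]

/-- Induction step of the OMP analysis: if the first `k` iterations selected indices
`S = T^k ⊆ T = supp(x)` (with `|T| = K`, `k < K`), `x̂` is the least-squares estimate
supported on `S`, and the residual `r = y − Φ x̂` is nonzero, then any maximizer
`t` of `|⟨r, φ_j⟩|` lies in `T \ T^k`. -/
theorem omp_induction_step (m n K k : ℕ) (hk : k < K)
    (Φ : Matrix (Fin m) (Fin n) ℝ) (μ : ℝ)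
    (hunit : ∀ j, ∑ i, (Φ i j) ^ 2 = 1)
    (hμ : ∀ a b, a ≠ b → |∑ i, Φ i a * Φ i b| ≤ μ)
    (hμK : μ < 1 / (2 * K - 1))
    (x : Fin n → ℝ)
    (hx : (Finset.univ.filter (fun j => x j ≠ 0)).card = K)
    (y : Fin m → ℝ) (hy : y = Φ.mulVec x)
    (S : Finset (Fin n)) (hScard : S.card = k) (hST : ∀ j ∈ S, x j ≠ 0)
    (xhat : Fin n → ℝ) (hxhat_supp : ∀ j ∉ S, xhat j = 0)
    (hxhat_min : ∀ z : Fin n → ℝ, (∀ j ∉ S, z j = 0) →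
      ∑ i, (y i - Φ.mulVec xhat i) ^ 2 ≤ ∑ i, (y i - Φ.mulVec z i) ^ 2)
    (r : Fin m → ℝ) (hr : r = fun i => y i - Φ.mulVec xhat i) (hr0 : r ≠ 0)
    (t : Fin n) (ht : ∀ j, |∑ i, r i * Φ i j| ≤ |∑ i, r i * Φ i t|) :
    x t ≠ 0 ∧ t ∉ S :=
  omp_induction_step_general m n K Φ μ hunit hμ hμK x hx y hy S hST xhat hxhat_supp hxhat_min r hr
    hr0 t ht
end

section
/- There exists a matrix Φ with 2K unit-norm columns and coherence μ = 1/(2K−1) together with two distinct K-sparse vectors x₁ ≠ x₂ such that Φx₁ = Φx₂; hence no algorithm can recover all K-sparse vectors from y = Φx when μ = 1/(2K−1), showing the condition μ < 1/(2K−1) is sharp. -/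
/-!
With `n = 2K`, the centering matrix `P = I - J/n` is a symmetric idempotent with `P 1 = 0`, so
`Φ = √(n/(n-1)) • P` has Gram matrix `ΦᵀΦ = (n/(n-1)) P = I - (J - I)/(n-1)`: unit columns with
all pairwise inner products `-1/(2K-1)`. The all-ones vector lies in the kernel of `Φ` and splits
as `x₁ - x₂` with `x₁ = 1` on `K` coordinates and `x₂ = -1` on the other `K`.
-/

open Finset Matrix

theorem exists_sparse_sub_eq {ι R : Type*} [Fintype ι] [AddGroup R] [DecidableEq R] {K : ℕ}
    (hι : Fintype.card ι ≤ 2 * K) (z : ι → R) :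
    ∃ x₁ x₂ : ι → R, #{j | x₁ j ≠ 0} ≤ K ∧ #{j | x₂ j ≠ 0} ≤ K ∧ z = x₁ - x₂ := by
  classical
  obtain ⟨s, -, hs⟩ := exists_subset_card_eq (s := (univ : Finset ι)) (min_le_right K #univ)
  refine ⟨fun j => if j ∈ s then z j else 0, fun j => if j ∈ s then 0 else -z j, ?_, ?_, ?_⟩
  · calc #{j | (if j ∈ s then z j else 0) ≠ 0} ≤ #s :=
          card_le_card fun j => by simp only [mem_filter]; split_ifs <;> simp_all
      _ ≤ K := hs ▸ min_le_left _ _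
  · calc #{j | (if j ∈ s then 0 else -z j) ≠ 0} ≤ #sᶜ :=
          card_le_card fun j => by simp only [mem_filter, mem_compl]; split_ifs <;> simp_all
      _ ≤ K := by rw [card_compl, hs, card_univ]; omega
  · ext j; simp only [Pi.sub_apply]; split_ifs <;> simp

noncomputable section

variable (ι : Type*) [Fintype ι] [DecidableEq ι]

def centeringMatrix : Matrix ι ι ℝ := 1 - (Fintype.card ι : ℝ)⁻¹ • of fun _ _ => 1

def simplexFrame : Matrix ι ι ℝ :=
  √(Fintype.card ι / (Fintype.card ι - 1)) • centeringMatrix ι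

end

variable {ι : Type*} [Fintype ι] [DecidableEq ι]

theorem centeringMatrix_transpose : (centeringMatrix ι)ᵀ = centeringMatrix ι := by
  ext a b
  simp [centeringMatrix, one_apply, eq_comm]

theorem centeringMatrix_mulVec_const [Nonempty ι] (c : ℝ) :
    centeringMatrix ι *ᵥ (fun _ => c) = 0 := by
  ext a
  have : (Fintype.card ι : ℝ) ≠ 0 := by positivity
  simp [centeringMatrix, mulVec, dotProduct, sub_mul, sum_sub_distrib, one_apply, this]

theorem centeringMatrix_mul_self : centeringMatrix ι * centeringMatrix ι = centeringMatrix ι := by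
  unfold centeringMatrix
  set n : ℝ := (Fintype.card ι : ℝ)
  set J : Matrix ι ι ℝ := of fun _ _ => 1
  have hJ : J * J = n • J := by ext; simp [J, n, mul_apply]
  have hn : n⁻¹ * n⁻¹ * n = n⁻¹ := by
    rcases eq_or_ne n 0 with h | h
    · simp [h]
    · field_simp
  simp only [sub_mul, mul_sub, one_mul, mul_one, Matrix.smul_mul, Matrix.mul_smul, hJ, smul_smul]
  linear_combination (norm := module) hn • J

theorem simplexFrame_transpose_mul_self [Nonempty ι] :
    (simplexFrame ι)ᵀ * simplexFrame ι =
      ((Fintype.card ι : ℝ) / (Fintype.card ι - 1)) • centeringMatrix ι := by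
  have hn : (1 : ℝ) ≤ Fintype.card ι := by exact_mod_cast Fintype.card_pos
  rw [simplexFrame, transpose_smul, centeringMatrix_transpose, Matrix.smul_mul, Matrix.mul_smul,
    centeringMatrix_mul_self, smul_smul, Real.mul_self_sqrt (div_nonneg (by linarith) (by linarith))]

theorem simplexFrame_inner_cols (hι : 1 < Fintype.card ι) (a b : ι) :
    ∑ i, simplexFrame ι i a * simplexFrame ι i b =
      if a = b then 1 else -(1 / ((Fintype.card ι : ℝ) - 1)) := by
  have : Nonempty ι := Fintype.card_pos_iff.mp (by omega)
  have hn : (Fintype.card ι : ℝ) - 1 ≠ 0 := by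
    rw [sub_ne_zero]; exact_mod_cast hι.ne'
  calc ∑ i, simplexFrame ι i a * simplexFrame ι i b = ((simplexFrame ι)ᵀ * simplexFrame ι) a b := by
        simp only [mul_apply, transpose_apply]
    _ = _ := by
        rw [simplexFrame_transpose_mul_self]
        simp only [centeringMatrix, Matrix.smul_apply, Matrix.sub_apply, one_apply, of_apply, smul_eq_mul]
        split_ifs
        · field_simp
        · field_simp; simp

theorem simplexFrame_mulVec_const [Nonempty ι] (c : ℝ) : simplexFrame ι *ᵥ (fun _ => c) = 0 := by
  rw [simplexFrame, smul_mulVec, centeringMatrix_mulVec_const, smul_zero]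

/-- Sharpness of the mutual incoherence condition: for every `K ≥ 1` there exists a
matrix `Φ` with `2K` unit-norm columns whose coherence equals `1/(2K−1)` (indeed all
pairwise column inner products have absolute value `1/(2K−1)`), together with two
distinct `K`-sparse vectors `x₁ ≠ x₂` with `Φx₁ = Φx₂`; hence `K`-sparse recovery can
fail when `μ = 1/(2K−1)`. -/
theorem coherence_condition_sharp (K : ℕ) (hK : 1 ≤ K) :
    ∃ (m : ℕ) (Φ : Matrix (Fin m) (Fin (2 * K)) ℝ) (x₁ x₂ : Fin (2 * K) → ℝ),
      (∀ j, ∑ i, (Φ i j) ^ 2 = 1) ∧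
      (∀ a b, a ≠ b → |∑ i, Φ i a * Φ i b| = 1 / (2 * K - 1)) ∧
      (Finset.univ.filter (fun j => x₁ j ≠ 0)).card ≤ K ∧
      (Finset.univ.filter (fun j => x₂ j ≠ 0)).card ≤ K ∧
      x₁ ≠ x₂ ∧
      Φ.mulVec x₁ = Φ.mulVec x₂ := by
  have hcard : 1 < Fintype.card (Fin (2 * K)) := by rw [Fintype.card_fin]; omega
  have : Nonempty (Fin (2 * K)) := ⟨⟨0, by omega⟩⟩
  obtain ⟨x₁, x₂, hx₁, hx₂, hsplit⟩ :=
    exists_sparse_sub_eq (Fintype.card_fin _).le (fun _ => (1 : ℝ))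
  refine ⟨2 * K, simplexFrame _, x₁, x₂, fun j => ?_, fun a b hab => ?_, hx₁, hx₂, ?_, ?_⟩
  · simpa [sq] using simplexFrame_inner_cols hcard j j
  · have hK' : (0 : ℝ) < 2 * K - 1 := by
      have : (1 : ℝ) ≤ K := by exact_mod_cast hK
      linarith
    rw [simplexFrame_inner_cols hcard, if_neg hab, Fintype.card_fin, Nat.cast_mul, Nat.cast_ofNat,
      abs_neg, abs_of_pos (one_div_pos.mpr hK')]
  · rintro rfl
    simpa using congrFun hsplit ⟨0, by omega⟩
  · rw [← sub_eq_zero, ← mulVec_sub, ← hsplit, simplexFrame_mulVec_const]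
end
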